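/- (Theorem 4.1, expected generalization bound under distribution shift.) Let P̃ be a target Borel probability measure on ℝ^m with finite first moment, let ξ₁,…,ξ_N be i.i.d. from P*, P̂_N their empirical measure, τ_ε := (1+ε)·inf_{x∈𝒳} E_{P̂_N}[h(x,ξ)] (a.s. finite), and (x̂_N, k̂_N) a random pair a.s. RS-feasible for τ_ε with respect to P̂_N. Suppose that for constants c₁, c₂ > 0, a > 1 and p := max(m,2), D := d_W(P*, P̂_N) satisfies P{D ≥ r} ≤ c₁·exp(−c₂·N·r^p) for r ∈ (0,1] and P{D ≥ r} ≤ c₁·exp(−c₂·N·r^a) for r > 1. Then, with J̃ := inf_{x∈𝒳} E_{P̃}[h(x,ξ)] assumed finite, E[ E_{P̃}[h(x̂_N,ξ)] − J̃ ] ≤ ε·J̃ + (2+ε)·L·d_W(P*, P̃) + (2+ε)·L·( C_p·N^{−1/p} + C_a·N^{−1/a} ), where C_p = ∫₀^∞ c₁ e^{−c₂ t^p} dt, C_a = ∫₀^∞ c₁ e^{−c₂ t^a} dt, and the outer expectation is over the sample data. -/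

import Mathlib

open MeasureTheory

noncomputable section

abbrev Vec (m : ℕ) := EuclideanSpace ℝ (Fin m)

/-- A coupling of two Borel probability measures on `Vec m`. -/
def IsCoupling {m : ℕ} (γ : Measure (Vec m × Vec m)) (P Q : Measure (Vec m)) : Prop :=
  IsProbabilityMeasure γ ∧ γ.map Prod.fst = P ∧ γ.map Prod.snd = Q

/-- Type-1 Wasserstein distance: infimum of `∫ ‖ξ₁ - ξ₂‖₂ dγ` over couplings `γ`. -/
noncomputable def wDist {m : ℕ} (P Q : Measure (Vec m)) : ℝ :=
  sInf {c : ℝ | ∃ γ : Measure (Vec m × Vec m), IsCoupling γ P Q ∧ c = ∫ p, ‖p.1 - p.2‖ ∂γ}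

/-- `(x, k)` is RS-feasible for reference value `τ` with respect to `Phat`. -/
def RSFeasible {m : ℕ} {X : Type*} (h : X → Vec m → ℝ)
    (Phat : Measure (Vec m)) (τ : ℝ) (x : X) (k : ℝ) : Prop :=
  0 ≤ k ∧ ∀ P : Measure (Vec m), IsProbabilityMeasure P →
    Integrable (fun ξ => ‖ξ‖) P → (∫ ξ, h x ξ ∂P) - τ ≤ k * wDist P Phat

/-- Empirical measure `(1/N) ∑ δ_{x i}`. -/
noncomputable def empMeas {m N : ℕ} (xs : Fin N → Vec m) : Measure (Vec m) :=
  (N : ENNReal)⁻¹ • ∑ i : Fin N, Measure.dirac (xs i)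

open Set Real
open scoped NNReal ENNReal

/-!
Testing the feasibility of `(x̂, k̂)` against `P̂_N` itself gives `E_{P̂_N} h(x̂) ≤ (1 + ε) Ĵ`.
Each `h x` is `L`-Lipschitz, so by the easy half of Kantorovich–Rubinstein duality, routed
through `P*`, expectations under `P̂_N` and `P̃` differ by at most
`δ := L (d_W(P*, P̂_N) + d_W(P*, P̃))`, uniformly in `x`. Hence `Ĵ ≤ J̃ + δ` and, for every
sample, `E_{P̃} h(x̂) ≤ (1 + ε) J̃ + (2 + ε) δ`. It remains to bound `E[d_W(P*, P̂_N)]`: by the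
layer-cake formula it is at most the integral over `t > 0` of the two tail bounds, and the
substitution `t ↦ N^{1/q} t` turns these integrals into `C_p N^{-1/p}` and `C_a N^{-1/a}`.
-/

theorem LipschitzWith.integrable_of_integrable_norm {E F : Type*} [NormedAddCommGroup E]
    [MeasurableSpace E] [OpensMeasurableSpace E] [SecondCountableTopology E]
    [NormedAddCommGroup F] {μ : Measure E} [IsFiniteMeasure μ] {K : ℝ≥0} {f : E → F}
    (hf : LipschitzWith K f) (hμ : Integrable (fun ξ => ‖ξ‖) μ) : Integrable f μ := by
  refine ((integrable_const ‖f 0‖).add (hμ.const_mul K)).mono'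
    hf.continuous.aestronglyMeasurable (ae_of_all _ fun ξ => ?_)
  simpa using norm_le_norm_add_const_of_dist_le (hf.dist_le_mul ξ 0)

namespace IsCoupling

variable {m : ℕ} {γ : Measure (Vec m × Vec m)} {P Q : Measure (Vec m)}
  {E : Type*} [NormedAddCommGroup E] {f : Vec m → E}

theorem integrable_comp_fst (hγ : IsCoupling γ P Q) (hf : Integrable f P) :
    Integrable (fun p => f p.1) γ := by
  rw [← hγ.2.1] at hf
  exact (integrable_map_measure hf.1 measurable_fst.aemeasurable).1 hf

theorem integrable_comp_snd (hγ : IsCoupling γ P Q) (hf : Integrable f Q) :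
    Integrable (fun p => f p.2) γ := by
  rw [← hγ.2.2] at hf
  exact (integrable_map_measure hf.1 measurable_snd.aemeasurable).1 hf

theorem integral_comp_fst [NormedSpace ℝ E] (hγ : IsCoupling γ P Q)
    (hf : AEStronglyMeasurable f P) :
    ∫ p, f p.1 ∂γ = ∫ ξ, f ξ ∂P := by
  rw [← hγ.2.1] at hf ⊢
  exact (integral_map measurable_fst.aemeasurable hf).symm

theorem integral_comp_snd [NormedSpace ℝ E] (hγ : IsCoupling γ P Q)
    (hf : AEStronglyMeasurable f Q) :
    ∫ p, f p.2 ∂γ = ∫ ξ, f ξ ∂Q := by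
  rw [← hγ.2.2] at hf ⊢
  exact (integral_map measurable_snd.aemeasurable hf).symm

theorem integrable_norm_sub (hγ : IsCoupling γ P Q) (hP : Integrable (fun ξ => ‖ξ‖) P)
    (hQ : Integrable (fun ξ => ‖ξ‖) Q) : Integrable (fun p => ‖p.1 - p.2‖) γ :=
  ((hγ.integrable_comp_fst hP).add (hγ.integrable_comp_snd hQ)).mono'
    (continuous_fst.sub continuous_snd).norm.aestronglyMeasurable
    (ae_of_all _ fun p => by simpa using norm_sub_le p.1 p.2)

theorem abs_integral_sub_le {K : ℝ≥0} {f : Vec m → ℝ} (hf : LipschitzWith K f)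
    (hγ : IsCoupling γ P Q) [IsFiniteMeasure P] [IsFiniteMeasure Q]
    (hP : Integrable (fun ξ => ‖ξ‖) P) (hQ : Integrable (fun ξ => ‖ξ‖) Q) :
    |∫ ξ, f ξ ∂P - ∫ ξ, f ξ ∂Q| ≤ K * ∫ p, ‖p.1 - p.2‖ ∂γ := by
  have hfP := hf.integrable_of_integrable_norm hP
  have hfQ := hf.integrable_of_integrable_norm hQ
  rw [← hγ.integral_comp_fst hfP.1, ← hγ.integral_comp_snd hfQ.1,
    ← integral_sub (hγ.integrable_comp_fst hfP) (hγ.integrable_comp_snd hfQ),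
    ← integral_const_mul, ← Real.norm_eq_abs]
  exact norm_integral_le_of_norm_le ((hγ.integrable_norm_sub hP hQ).const_mul _)
    (ae_of_all _ fun p => hf.dist_le_mul p.1 p.2)

end IsCoupling

section Wasserstein

variable {m : ℕ}

theorem isCoupling_prod (P Q : Measure (Vec m)) [IsProbabilityMeasure P]
    [IsProbabilityMeasure Q] : IsCoupling (P.prod Q) P Q :=
  ⟨inferInstance, by simp, by simp⟩

theorem isCoupling_map_diag (P : Measure (Vec m)) [IsProbabilityMeasure P] :
    IsCoupling (P.map fun ξ => (ξ, ξ)) P P := by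
  have hdiag : Measurable fun ξ : Vec m => (ξ, ξ) := by fun_prop
  refine ⟨Measure.isProbabilityMeasure_map hdiag.aemeasurable, ?_, ?_⟩
  · rw [Measure.map_map measurable_fst hdiag]; exact Measure.map_id
  · rw [Measure.map_map measurable_snd hdiag]; exact Measure.map_id

theorem wDist_nonneg (P Q : Measure (Vec m)) : 0 ≤ wDist P Q :=
  Real.sInf_nonneg <| by
    rintro _ ⟨γ, -, rfl⟩
    exact integral_nonneg fun p => norm_nonneg _

theorem wDist_self (P : Measure (Vec m)) [IsProbabilityMeasure P] : wDist P P = 0 := by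
  refine le_antisymm (csInf_le ⟨0, ?_⟩ ⟨_, isCoupling_map_diag P, ?_⟩) (wDist_nonneg P P)
  · rintro _ ⟨γ, -, rfl⟩
    exact integral_nonneg fun p => norm_nonneg _
  · rw [integral_map (f := fun p : Vec m × Vec m => ‖p.1 - p.2‖)
      (by fun_prop : Measurable fun ξ : Vec m => (ξ, ξ)).aemeasurable
      (continuous_fst.sub continuous_snd).norm.aestronglyMeasurable]
    simp

theorem abs_integral_sub_le_mul_wDist {K : ℝ≥0} {f : Vec m → ℝ} (hf : LipschitzWith K f)
    {P Q : Measure (Vec m)} [IsProbabilityMeasure P] [IsProbabilityMeasure Q]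
    (hP : Integrable (fun ξ => ‖ξ‖) P) (hQ : Integrable (fun ξ => ‖ξ‖) Q) :
    |∫ ξ, f ξ ∂P - ∫ ξ, f ξ ∂Q| ≤ K * wDist P Q := by
  rw [wDist, ← smul_eq_mul, ← Real.sInf_smul_of_nonneg K.coe_nonneg]
  refine le_csInf (Set.Nonempty.smul_set ⟨_, _, isCoupling_prod P Q, rfl⟩) ?_
  rintro _ ⟨_, ⟨γ, hγ, rfl⟩, rfl⟩
  exact hγ.abs_integral_sub_le hf hP hQ

theorem abs_integral_sub_le_mul_wDist_add_wDist {K : ℝ≥0} {f : Vec m → ℝ} (hf : LipschitzWith K f)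
    {P Q S : Measure (Vec m)} [IsProbabilityMeasure P] [IsProbabilityMeasure Q]
    [IsProbabilityMeasure S] (hP : Integrable (fun ξ => ‖ξ‖) P)
    (hQ : Integrable (fun ξ => ‖ξ‖) Q) (hS : Integrable (fun ξ => ‖ξ‖) S) :
    |∫ ξ, f ξ ∂P - ∫ ξ, f ξ ∂Q| ≤ K * (wDist S P + wDist S Q) := by
  rw [mul_add]
  calc |∫ ξ, f ξ ∂P - ∫ ξ, f ξ ∂Q|
      ≤ |(∫ ξ, f ξ ∂S) - ∫ ξ, f ξ ∂P| + |(∫ ξ, f ξ ∂S) - ∫ ξ, f ξ ∂Q| := by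
        rw [abs_sub_comm (∫ ξ, f ξ ∂S)]
        exact abs_sub_le _ _ _
    _ ≤ _ := add_le_add (abs_integral_sub_le_mul_wDist hf hS hP)
        (abs_integral_sub_le_mul_wDist hf hS hQ)

end Wasserstein

section EmpiricalMeasure

variable {m N : ℕ}

theorem isProbabilityMeasure_empMeas (hN : 0 < N) (xs : Fin N → Vec m) :
    IsProbabilityMeasure (empMeas xs) := by
  constructor
  simp [empMeas, ENNReal.inv_mul_cancel (Nat.cast_ne_zero.2 hN.ne') (ENNReal.natCast_ne_top N)]

theorem integrable_empMeas (hN : 0 < N) (xs : Fin N → Vec m) {E : Type*} [NormedAddCommGroup E]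
    (f : Vec m → E) : Integrable f (empMeas xs) :=
  (integrable_finsetSum_measure.2 fun _ _ => integrable_dirac enorm_lt_top).smul_measure
    (ENNReal.inv_ne_top.2 (Nat.cast_ne_zero.2 hN.ne'))

end EmpiricalMeasure

theorem RSFeasible.integral_le {m : ℕ} {X : Type*} {h : X → Vec m → ℝ} {Phat : Measure (Vec m)}
    [IsProbabilityMeasure Phat] {τ : ℝ} {x : X} {k : ℝ} (hfeas : RSFeasible h Phat τ x k)
    (hPhat : Integrable (fun ξ => ‖ξ‖) Phat) : ∫ ξ, h x ξ ∂Phat ≤ τ := by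
  have := hfeas.2 Phat inferInstance hPhat
  rw [wDist_self, mul_zero] at this
  linarith

theorem le_one_add_mul_ciInf_add_of_abs_sub_le {X : Type*} [Nonempty X] {F G : X → ℝ}
    {δ ε : ℝ} (hε : 0 ≤ 1 + ε) (hF : BddBelow (range F)) (hFG : ∀ x, |F x - G x| ≤ δ)
    {x₀ : X} (hx₀ : F x₀ ≤ (1 + ε) * ⨅ x, F x) :
    G x₀ ≤ (1 + ε) * (⨅ x, G x) + (2 + ε) * δ := by
  have hinf : (⨅ x, F x) ≤ (⨅ x, G x) + δ := by
    refine sub_le_iff_le_add.1 (le_ciInf fun x => ?_)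
    linarith [ciInf_le hF x, (abs_le.1 (hFG x)).2]
  have hx₀G : G x₀ ≤ F x₀ + δ := by linarith [(abs_le.1 (hFG x₀)).1]
  nlinarith [mul_le_mul_of_nonneg_left hinf hε]

theorem RSFeasible.integral_le_one_add_mul_iInf_add {m : ℕ} {X : Type*} [Nonempty X]
    {h : X → Vec m → ℝ} {K : ℝ≥0} (hh : ∀ x, LipschitzWith K (h x))
    {Pstar Ptilde Phat : Measure (Vec m)} [IsProbabilityMeasure Pstar]
    [IsProbabilityMeasure Ptilde] [IsProbabilityMeasure Phat]
    (hPstar : Integrable (fun ξ => ‖ξ‖) Pstar) (hPtilde : Integrable (fun ξ => ‖ξ‖) Ptilde)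
    (hPhat : Integrable (fun ξ => ‖ξ‖) Phat)
    (hbdd : BddBelow (range fun x => ∫ ξ, h x ξ ∂Phat)) {ε : ℝ} (hε : 0 ≤ 1 + ε) {x : X} {k : ℝ}
    (hfeas : RSFeasible h Phat ((1 + ε) * ⨅ x, ∫ ξ, h x ξ ∂Phat) x k) :
    ∫ ξ, h x ξ ∂Ptilde ≤ (1 + ε) * (⨅ x, ∫ ξ, h x ξ ∂Ptilde)
      + (2 + ε) * (K * (wDist Pstar Phat + wDist Pstar Ptilde)) :=
  le_one_add_mul_ciInf_add_of_abs_sub_le hε hbdd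
    (fun x => abs_integral_sub_le_mul_wDist_add_wDist (hh x) hPhat hPtilde hPstar)
    (hfeas.integral_le hPhat)

section TailBound

variable {Ω : Type*} [MeasurableSpace Ω] {μ : Measure Ω} {f : Ω → ℝ} {g : ℝ → ℝ}

theorem lintegral_ofReal_le_of_meas_le (hf : 0 ≤ f) (hfm : Measurable f)
    (hg : IntegrableOn g (Ioi 0)) (hg₀ : ∀ t, 0 < t → 0 ≤ g t)
    (htail : ∀ t, 0 < t → μ {ω | t ≤ f ω} ≤ ENNReal.ofReal (g t)) :
    ∫⁻ ω, ENNReal.ofReal (f ω) ∂μ ≤ ENNReal.ofReal (∫ t in Ioi 0, g t) := by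
  rw [lintegral_eq_lintegral_meas_le μ (ae_of_all _ hf) hfm.aemeasurable,
    ofReal_integral_eq_lintegral_ofReal hg ((ae_restrict_iff' measurableSet_Ioi).2
      (ae_of_all _ hg₀))]
  exact setLIntegral_mono' measurableSet_Ioi htail

theorem integrable_of_meas_le (hf : 0 ≤ f) (hfm : Measurable f)
    (hg : IntegrableOn g (Ioi 0)) (hg₀ : ∀ t, 0 < t → 0 ≤ g t)
    (htail : ∀ t, 0 < t → μ {ω | t ≤ f ω} ≤ ENNReal.ofReal (g t)) : Integrable f μ :=
  ⟨hfm.aestronglyMeasurable, (hasFiniteIntegral_iff_ofReal (ae_of_all _ hf)).2 <|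
    (lintegral_ofReal_le_of_meas_le hf hfm hg hg₀ htail).trans_lt ENNReal.ofReal_lt_top⟩

theorem integral_le_of_meas_le (hf : 0 ≤ f) (hfm : Measurable f)
    (hg : IntegrableOn g (Ioi 0)) (hg₀ : ∀ t, 0 < t → 0 ≤ g t)
    (htail : ∀ t, 0 < t → μ {ω | t ≤ f ω} ≤ ENNReal.ofReal (g t)) :
    ∫ ω, f ω ∂μ ≤ ∫ t in Ioi 0, g t := by
  rw [integral_eq_lintegral_of_nonneg_ae (ae_of_all _ hf) hfm.aestronglyMeasurable]
  exact ENNReal.toReal_le_of_le_ofReal (setIntegral_nonneg measurableSet_Ioi hg₀)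
    (lintegral_ofReal_le_of_meas_le hf hfm hg hg₀ htail)

end TailBound

theorem integral_Ioi_comp_mul_rpow {E : Type*} [NormedAddCommGroup E] [NormedSpace ℝ E]
    (g : ℝ → E) {s q : ℝ} (hs : 0 < s) (hq : q ≠ 0) :
    ∫ t in Ioi 0, g (s * t ^ q) = s ^ (-1 / q) • ∫ t in Ioi 0, g (t ^ q) := by
  have hb : 0 < s ^ (1 / q) := rpow_pos_of_pos hs _
  have key := integral_comp_mul_left_Ioi (fun t => g (t ^ q)) 0 hb
  rw [mul_zero] at key
  rw [neg_div, rpow_neg hs.le, ← key]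
  refine setIntegral_congr_fun measurableSet_Ioi fun t ht => ?_
  rw [mul_rpow hb.le (le_of_lt ht), ← rpow_mul hs.le, one_div_mul_cancel hq, rpow_one]

theorem integrableOn_exp_neg_mul_rpow (c : ℝ) {b q : ℝ} (hb : 0 < b) (hq : 0 < q) :
    IntegrableOn (fun t => c * exp (-(b * t ^ q))) (Ioi 0) := by
  refine IntegrableOn.congr_fun
    ((integrableOn_rpow_mul_exp_neg_mul_rpow (s := 0) (by norm_num) hq hb).const_mul c)
    (fun t _ => ?_) measurableSet_Ioi
  simp [neg_mul]

section TwoRegimeTail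

variable {Ω : Type*} [MeasurableSpace Ω] {μ : Measure Ω} {f : Ω → ℝ}
  {c₁ c₂ n p a : ℝ}

theorem integral_exp_neg_mul_rpow_two_regime (hc₂ : 0 < c₂) (hn : 0 < n) (hp : 0 < p)
    (ha : 0 < a) :
    ∫ t in Ioi 0, (c₁ * exp (-(c₂ * n * t ^ p)) + c₁ * exp (-(c₂ * n * t ^ a))) =
      (∫ t in Ioi 0, c₁ * exp (-(c₂ * t ^ p))) * n ^ (-1 / p)
        + (∫ t in Ioi 0, c₁ * exp (-(c₂ * t ^ a))) * n ^ (-1 / a) := by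
  have hb : 0 < c₂ * n := mul_pos hc₂ hn
  have hscale := fun q (hq : 0 < q) =>
    integral_Ioi_comp_mul_rpow (fun u => c₁ * exp (-(c₂ * u))) hn hq.ne'
  simp only [smul_eq_mul] at hscale
  rw [integral_add (integrableOn_exp_neg_mul_rpow c₁ hb hp)
    (integrableOn_exp_neg_mul_rpow c₁ hb ha)]
  simp only [mul_assoc c₂, hscale p hp, hscale a ha]
  ring

theorem integrable_and_integral_le_of_two_regime_tail (hf : 0 ≤ f) (hfm : Measurable f)
    (hc₁ : 0 ≤ c₁) (hc₂ : 0 < c₂) (hn : 0 < n) (hp : 0 < p) (ha : 0 < a)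
    (htail₁ : ∀ r, 0 < r → r ≤ 1 →
      μ {ω | r ≤ f ω} ≤ ENNReal.ofReal (c₁ * exp (-(c₂ * n * r ^ p))))
    (htail₂ : ∀ r, 1 < r →
      μ {ω | r ≤ f ω} ≤ ENNReal.ofReal (c₁ * exp (-(c₂ * n * r ^ a)))) :
    Integrable f μ ∧ ∫ ω, f ω ∂μ ≤
      (∫ t in Ioi 0, c₁ * exp (-(c₂ * t ^ p))) * n ^ (-1 / p)
        + (∫ t in Ioi 0, c₁ * exp (-(c₂ * t ^ a))) * n ^ (-1 / a) := by
  have hb : 0 < c₂ * n := mul_pos hc₂ hn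
  have hg :=
    (integrableOn_exp_neg_mul_rpow c₁ hb hp).add (integrableOn_exp_neg_mul_rpow c₁ hb ha)
  have hg₀ : ∀ t : ℝ, 0 < t →
      0 ≤ c₁ * exp (-(c₂ * n * t ^ p)) + c₁ * exp (-(c₂ * n * t ^ a)) :=
    fun t _ => by positivity
  have htail : ∀ t : ℝ, 0 < t → μ {ω | t ≤ f ω} ≤
      ENNReal.ofReal (c₁ * exp (-(c₂ * n * t ^ p)) + c₁ * exp (-(c₂ * n * t ^ a))) := by
    intro t ht
    rcases le_or_gt t 1 with ht1 | ht1
    · exact (htail₁ t ht ht1).trans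
        (ENNReal.ofReal_le_ofReal (le_add_of_nonneg_right (by positivity)))
    · exact (htail₂ t ht1).trans
        (ENNReal.ofReal_le_ofReal (le_add_of_nonneg_left (by positivity)))
  refine ⟨integrable_of_meas_le hf hfm hg hg₀ htail, ?_⟩
  rw [← integral_exp_neg_mul_rpow_two_regime hc₂ hn hp ha]
  exact integral_le_of_meas_le hf hfm hg hg₀ htail

end TwoRegimeTail

theorem expected_generalization_bound_shift_general {m N : ℕ} (hN : 0 < N)
    {X : Type*} [Nonempty X]
    {Ω : Type*} [MeasurableSpace Ω] (μ : Measure Ω) [IsProbabilityMeasure μ]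
    (h : X → Vec m → ℝ) (L : ℝ) (hL : 0 ≤ L)
    (hLip : ∀ x ξ η, |h x ξ - h x η| ≤ L * ‖ξ - η‖)
    -- sampling distribution and target distribution
    (Pstar Ptilde : Measure (Vec m))
    [IsProbabilityMeasure Pstar] [IsProbabilityMeasure Ptilde]
    (hPstarmom : Integrable (fun ξ => ‖ξ‖) Pstar)
    (hPtildemom : Integrable (fun ξ => ‖ξ‖) Ptilde)
    -- i.i.d. samples from Pstar
    (ξs : Fin N → Ω → Vec m)
    -- empirical measure
    (Phat : Ω → Measure (Vec m)) (hPhat : ∀ ω, Phat ω = empMeas (fun i => ξs i ω))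
    -- reference value
    (ε : ℝ) (hε : 0 < ε)
    (τ : Ω → ℝ) (hτ : ∀ ω, τ ω = (1 + ε) * ⨅ x, ∫ ξ, h x ξ ∂(Phat ω))
    (hfin : ∀ᵐ ω ∂μ, BddBelow (Set.range fun x => ∫ ξ, h x ξ ∂(Phat ω)))
    (hfinPtilde : BddBelow (Set.range fun x => ∫ ξ, h x ξ ∂Ptilde))
    -- almost surely RS-feasible random pair
    (xhat : Ω → X) (khat : Ω → ℝ)
    (hfeas : ∀ᵐ ω ∂μ, RSFeasible h (Phat ω) (τ ω) (xhat ω) (khat ω))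
    -- two-regime concentration of D = d_W(Pstar, Phat_N)
    (c₁ c₂ a : ℝ) (hc₁ : 0 < c₁) (hc₂ : 0 < c₂) (ha : 1 < a)
    (hDmeas : Measurable fun ω => wDist Pstar (Phat ω))
    (htail₁ : ∀ r : ℝ, 0 < r → r ≤ 1 →
      μ {ω | r ≤ wDist Pstar (Phat ω)} ≤
        ENNReal.ofReal (c₁ * Real.exp (-(c₂ * N * r ^ (max (m : ℝ) 2)))))
    (htail₂ : ∀ r : ℝ, 1 < r →
      μ {ω | r ≤ wDist Pstar (Phat ω)} ≤
        ENNReal.ofReal (c₁ * Real.exp (-(c₂ * N * r ^ a)))) :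
    (∫ ω, ((∫ ξ, h (xhat ω) ξ ∂Ptilde) - (⨅ x, ∫ ξ, h x ξ ∂Ptilde)) ∂μ) ≤
      ε * (⨅ x, ∫ ξ, h x ξ ∂Ptilde) + (2 + ε) * L * wDist Pstar Ptilde
        + (2 + ε) * L *
          ((∫ t in Set.Ioi (0 : ℝ), c₁ * Real.exp (-(c₂ * t ^ (max (m : ℝ) 2))))
              * (N : ℝ) ^ (-1 / (max (m : ℝ) 2))
            + (∫ t in Set.Ioi (0 : ℝ), c₁ * Real.exp (-(c₂ * t ^ a)))
              * (N : ℝ) ^ (-1 / a)) := by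
  set J := ⨅ x, ∫ ξ, h x ξ ∂Ptilde
  have hLipschitz : ∀ x, LipschitzWith L.toNNReal (h x) := fun x =>
    LipschitzWith.of_dist_le_mul fun ξ η => by
      rw [Real.dist_eq, dist_eq_norm, Real.coe_toNNReal L hL]
      exact hLip x ξ η
  have hPhatProb : ∀ ω, IsProbabilityMeasure (Phat ω) := fun ω =>
    hPhat ω ▸ isProbabilityMeasure_empMeas hN _
  have hPhatmom : ∀ ω, Integrable (fun ξ => ‖ξ‖) (Phat ω) := fun ω =>
    hPhat ω ▸ integrable_empMeas hN _ _
  obtain ⟨hDint, hDle⟩ := integrable_and_integral_le_of_two_regime_tail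
    (fun ω => wDist_nonneg _ _) hDmeas hc₁.le hc₂ (Nat.cast_pos.2 hN)
    (by positivity) (by linarith) htail₁ htail₂
  have hexcess : ∀ᵐ ω ∂μ, (∫ ξ, h (xhat ω) ξ ∂Ptilde) - J ≤
      ε * J + (2 + ε) * L * wDist Pstar Ptilde + (2 + ε) * L * wDist Pstar (Phat ω) := by
    filter_upwards [hfeas, hfin] with ω hfeasω hfinω
    have hbound := (hτ ω ▸ hfeasω).integral_le_one_add_mul_iInf_add hLipschitz hPstarmom
      hPtildemom (hPhatmom ω) hfinω (by linarith)
    rw [Real.coe_toNNReal L hL] at hbound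
    linarith
  calc ∫ ω, ((∫ ξ, h (xhat ω) ξ ∂Ptilde) - J) ∂μ
      ≤ ∫ ω, (ε * J + (2 + ε) * L * wDist Pstar Ptilde
          + (2 + ε) * L * wDist Pstar (Phat ω)) ∂μ :=
        integral_mono_of_nonneg (ae_of_all _ fun ω => sub_nonneg.2 (ciInf_le hfinPtilde _))
          ((integrable_const _).add (hDint.const_mul _)) hexcess
    _ = ε * J + (2 + ε) * L * wDist Pstar Ptilde
          + (2 + ε) * L * ∫ ω, wDist Pstar (Phat ω) ∂μ := by
        rw [integral_add (integrable_const _) (hDint.const_mul _), integral_const,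
          integral_const_mul, probReal_univ, one_smul]
    _ ≤ _ := by gcongr

/-- Theorem 4.1, expected generalization bound under shift:
E[ E_{Ptilde}[h(xhat_N,.)] - Jtilde ] <= eps Jtilde + (2+eps) L d_W(P*,Ptilde)
  + (2+eps) L (C_p N^{-1/p} + C_a N^{-1/a}). -/
theorem expected_generalization_bound_shift {m N : ℕ} (hN : 0 < N)
    {X : Type*} [Nonempty X]
    {Ω : Type*} [MeasurableSpace Ω] (μ : Measure Ω) [IsProbabilityMeasure μ]
    (h : X → Vec m → ℝ) (L : ℝ) (hL : 0 ≤ L)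
    (hLip : ∀ x ξ η, |h x ξ - h x η| ≤ L * ‖ξ - η‖)
    (hInt : ∀ x (P : Measure (Vec m)), IsProbabilityMeasure P →
      Integrable (fun ξ => ‖ξ‖) P → Integrable (h x) P)
    -- sampling distribution and target distribution
    (Pstar Ptilde : Measure (Vec m))
    [IsProbabilityMeasure Pstar] [IsProbabilityMeasure Ptilde]
    (hPstarmom : Integrable (fun ξ => ‖ξ‖) Pstar)
    (hPtildemom : Integrable (fun ξ => ‖ξ‖) Ptilde)
    -- i.i.d. samples from Pstar
    (ξs : Fin N → Ω → Vec m) (hmeas : ∀ i, Measurable (ξs i))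
    (hindep : ProbabilityTheory.iIndepFun ξs μ)
    (hdist : ∀ i, μ.map (ξs i) = Pstar)
    -- empirical measure
    (Phat : Ω → Measure (Vec m)) (hPhat : ∀ ω, Phat ω = empMeas (fun i => ξs i ω))
    -- reference value
    (ε : ℝ) (hε : 0 < ε)
    (τ : Ω → ℝ) (hτ : ∀ ω, τ ω = (1 + ε) * ⨅ x, ∫ ξ, h x ξ ∂(Phat ω))
    (hfin : ∀ᵐ ω ∂μ, BddBelow (Set.range fun x => ∫ ξ, h x ξ ∂(Phat ω)))
    (hfinPtilde : BddBelow (Set.range fun x => ∫ ξ, h x ξ ∂Ptilde))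
    -- almost surely RS-feasible random pair
    (xhat : Ω → X) (khat : Ω → ℝ)
    (hfeas : ∀ᵐ ω ∂μ, RSFeasible h (Phat ω) (τ ω) (xhat ω) (khat ω))
    (hxhatmeas : Measurable fun ω => ∫ ξ, h (xhat ω) ξ ∂Ptilde)
    -- two-regime concentration of D = d_W(Pstar, Phat_N)
    (c₁ c₂ a : ℝ) (hc₁ : 0 < c₁) (hc₂ : 0 < c₂) (ha : 1 < a)
    (hDmeas : Measurable fun ω => wDist Pstar (Phat ω))
    (htail₁ : ∀ r : ℝ, 0 < r → r ≤ 1 →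
      μ {ω | r ≤ wDist Pstar (Phat ω)} ≤
        ENNReal.ofReal (c₁ * Real.exp (-(c₂ * N * r ^ (max (m : ℝ) 2)))))
    (htail₂ : ∀ r : ℝ, 1 < r →
      μ {ω | r ≤ wDist Pstar (Phat ω)} ≤
        ENNReal.ofReal (c₁ * Real.exp (-(c₂ * N * r ^ a)))) :
    (∫ ω, ((∫ ξ, h (xhat ω) ξ ∂Ptilde) - (⨅ x, ∫ ξ, h x ξ ∂Ptilde)) ∂μ) ≤
      ε * (⨅ x, ∫ ξ, h x ξ ∂Ptilde) + (2 + ε) * L * wDist Pstar Ptilde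
        + (2 + ε) * L *
          ((∫ t in Set.Ioi (0 : ℝ), c₁ * Real.exp (-(c₂ * t ^ (max (m : ℝ) 2))))
              * (N : ℝ) ^ (-1 / (max (m : ℝ) 2))
            + (∫ t in Set.Ioi (0 : ℝ), c₁ * Real.exp (-(c₂ * t ^ a)))
              * (N : ℝ) ^ (-1 / a)) :=
  expected_generalization_bound_shift_general hN μ h L hL hLip Pstar Ptilde hPstarmom hPtildemom ξs
    Phat hPhat ε hε τ hτ hfin hfinPtilde xhat khat hfeas c₁ c₂ a hc₁ hc₂ ha hDmeas htail₁ htail₂
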